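/- Let A ∈ ℂ^{n×n} with Hermitian part H = (A+A*)/2 having eigenvalues μ_1 ≥ ⋯ ≥ μ_n, and let V ∈ ℂ^{n×k} have orthonormal columns. If θ_1,…,θ_k are the eigenvalues of V*AV ordered with decreasing real parts, then for each j with 1 ≤ j ≤ k, Re θ_j ≤ M_j := (μ_1 + ⋯ + μ_j)/j. -/

import Mathlib

open Matrix Polynomial


lemma eval_charpoly' {m : ℕ} (B : Matrix (Fin m) (Fin m) ℂ) (x : ℂ) :
    B.charpoly.eval x = (x • (1 : Matrix (Fin m) (Fin m) ℂ) - B).det := by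
  rw [Matrix.charpoly, ← Polynomial.coe_evalRingHom, RingHom.map_det]
  congr 1
  ext i j
  by_cases h : i = j
  · subst h; simp [charmatrix_apply_eq]
  · simp [charmatrix_apply_ne _ _ _ h, Matrix.one_apply_ne h]

lemma charpoly_unitary_conj {m : ℕ} (B U : Matrix (Fin m) (Fin m) ℂ)
    (hU : Uᴴ * U = 1) : (Uᴴ * B * U).charpoly = B.charpoly := by
  have hm : ∀ (M N : Matrix (Fin m) (Fin m) ℂ),
      (M * N).map (C : ℂ →+* ℂ[X]) = M.map (C : ℂ →+* ℂ[X]) * N.map (C : ℂ →+* ℂ[X]) :=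
    fun M N => Matrix.map_mul
  have key : charmatrix (Uᴴ * B * U) =
      (Uᴴ.map (C : ℂ →+* ℂ[X])) * charmatrix B * (U.map (C : ℂ →+* ℂ[X])) := by
    rw [charmatrix, charmatrix]
    rw [Matrix.mul_sub, Matrix.sub_mul]
    congr 1
    · have h1 : (Uᴴ.map (C : ℂ →+* ℂ[X])) * Matrix.scalar (Fin m) (X : ℂ[X]) =
          (X : ℂ[X]) • (Uᴴ.map (C : ℂ →+* ℂ[X])) := by
        ext i j
        simp only [Matrix.mul_apply, Matrix.scalar_apply, Matrix.diagonal_apply, Matrix.smul_apply,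
          smul_eq_mul]
        rw [Finset.sum_eq_single j]
        · rw [if_pos rfl]; ring
        · intro b _ hb; simp [hb]
        · simp
      rw [h1, Matrix.smul_mul, ← hm, hU, Matrix.map_one _ (map_zero _) (map_one _)]
      ext i j
      by_cases h : i = j
      · subst h
        simp only [Matrix.scalar_apply, Matrix.diagonal_apply_eq, Matrix.smul_apply,
          Matrix.one_apply_eq, smul_eq_mul, mul_one]
      · simp only [Matrix.scalar_apply, Matrix.diagonal_apply_ne _ h, Matrix.smul_apply,
          Matrix.one_apply_ne h, smul_eq_mul, mul_zero]
    · simp only [RingHom.mapMatrix_apply]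
      rw [← hm, ← hm]
  rw [Matrix.charpoly, Matrix.charpoly, key, det_mul, det_mul]
  have : (Uᴴ.map (C : ℂ →+* ℂ[X])).det * (U.map (C : ℂ →+* ℂ[X])).det = 1 := by
    rw [mul_comm, ← det_mul, ← hm, mul_eq_one_comm.mp hU]
    simp
  calc (Uᴴ.map (C : ℂ →+* ℂ[X])).det * (charmatrix B).det * (U.map (C : ℂ →+* ℂ[X])).det
      = (charmatrix B).det * ((Uᴴ.map (C : ℂ →+* ℂ[X])).det * (U.map (C : ℂ →+* ℂ[X])).det) := by
        ring
    _ = (charmatrix B).det := by rw [this, mul_one]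

lemma schur_aux : ∀ (m : ℕ) (B : Matrix (Fin m) (Fin m) ℂ) (θ : Fin m → ℂ),
    B.charpoly = ∏ i, (X - C (θ i)) →
    ∃ U : Matrix (Fin m) (Fin m) ℂ, Uᴴ * U = 1 ∧
      (∀ i, (Uᴴ * B * U) i i = θ i) ∧
      (∀ i j : Fin m, j < i → (Uᴴ * B * U) i j = 0) := by
  intro m
  induction m with
  | zero =>
    intro B θ _
    exact ⟨1, by simp, fun i => i.elim0, fun i j _ => i.elim0⟩
  | succ m IH =>
    intro B θ hchar
    -- θ 0 is an eigenvalue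
    have heval : B.charpoly.eval (θ 0) = 0 := by
      rw [hchar, eval_prod]
      exact Finset.prod_eq_zero (Finset.mem_univ 0) (by simp)
    have hdet : ((θ 0) • (1 : Matrix (Fin (m+1)) (Fin (m+1)) ℂ) - B).det = 0 := by
      rw [← eval_charpoly']; exact heval
    obtain ⟨v, hv0, hv⟩ := Matrix.exists_mulVec_eq_zero_iff.mpr hdet
    have hBv : B *ᵥ v = (θ 0) • v := by
      have h1 : ((θ 0) • (1 : Matrix (Fin (m+1)) (Fin (m+1)) ℂ)) *ᵥ v = (θ 0) • v := by
        rw [Matrix.smul_mulVec, Matrix.one_mulVec]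
      rw [Matrix.sub_mulVec, h1] at hv
      exact (sub_eq_zero.mp hv).symm
    -- normalized eigenvector in Euclidean space
    set E := EuclideanSpace ℂ (Fin (m+1))
    let vE : E := WithLp.toLp 2 v
    have hvne : ‖vE‖ ≠ 0 := by
      rw [Ne, norm_eq_zero]
      exact fun h => hv0 (by simpa [vE] using congrArg WithLp.ofLp h)
    set v' : E := ‖vE‖⁻¹ • vE with hv'def
    have hv'norm : ‖v'‖ = 1 := by
      rw [hv'def, norm_smul, norm_inv, norm_norm]; exact inv_mul_cancel₀ hvne
    have hBv' : B *ᵥ (v' : Fin (m+1) → ℂ) = (θ 0) • (v' : Fin (m+1) → ℂ) := by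
      show B *ᵥ (‖vE‖⁻¹ • v) = (θ 0) • (‖vE‖⁻¹ • v)
      rw [Matrix.mulVec_smul, hBv, smul_comm]
    -- orthonormal basis extension
    have hcard : Module.finrank ℂ E = Fintype.card (Fin (m+1)) := by
      simp [E, finrank_euclideanSpace]
    have horth : Orthonormal ℂ (({0} : Set (Fin (m+1))).restrict (fun _ => v')) := by
      rw [orthonormal_iff_ite]
      rintro ⟨i, hi⟩ ⟨j, hj⟩
      simp only [Set.mem_singleton_iff] at hi hj
      subst hi; subst hj
      simp only [Set.restrict_apply, if_pos rfl]
      rw [@inner_self_eq_norm_sq_to_K ℂ]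
      show ((‖v'‖ : ℝ) : ℂ) ^ 2 = _
      rw [hv'norm]
      norm_num
    obtain ⟨b, hb⟩ := horth.exists_orthonormalBasis_extension_of_card_eq hcard
    have hb0 : b 0 = v' := hb 0 rfl
    -- the unitary matrix with columns b i
    set U1 : Matrix (Fin (m+1)) (Fin (m+1)) ℂ := Matrix.of (fun x y => b y x) with hU1def
    have hinner : ∀ i j : Fin (m+1), (inner ℂ (b i) (b j) : ℂ) = if i = j then 1 else 0 :=
      orthonormal_iff_ite.mp b.orthonormal
    have hU1 : U1ᴴ * U1 = 1 := by
      ext i j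
      have := hinner i j
      rw [PiLp.inner_apply] at this
      simpa [Matrix.mul_apply, hU1def, Matrix.conjTranspose_apply, Matrix.one_apply,
        RCLike.inner_apply, mul_comm] using this
    set Cm : Matrix (Fin (m+1)) (Fin (m+1)) ℂ := U1ᴴ * B * U1 with hCmdef
    have hCol : ∀ i, Cm i 0 = if i = 0 then θ 0 else 0 := by
      intro i
      have hBU : ∀ x, (B * U1) x 0 = θ 0 * v' x := by
        intro x
        have : (B * U1) x 0 = (B *ᵥ (b 0 : Fin (m+1) → ℂ)) x := by
          simp [Matrix.mul_apply, hU1def, Matrix.mulVec, dotProduct]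
        rw [this, hb0, hBv']
        rfl
      have : Cm i 0 = θ 0 * (inner ℂ (b i) (b 0) : ℂ) := by
        rw [hCmdef, Matrix.mul_assoc, Matrix.mul_apply]
        rw [PiLp.inner_apply, Finset.mul_sum]
        congr 1
        ext x
        rw [Matrix.conjTranspose_apply, hBU x, hb0]
        simp [hU1def, RCLike.inner_apply]
        ring
      rw [this, hinner i 0]
      split <;> simp
    have hcharCm : Cm.charpoly = B.charpoly := charpoly_unitary_conj B U1 hU1
    set B' : Matrix (Fin m) (Fin m) ℂ := Matrix.of (fun i j => Cm i.succ j.succ) with hB'def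
    have hsub : (charmatrix Cm).submatrix Fin.succ Fin.succ = charmatrix B' := by
      ext i j
      by_cases h : i = j
      · subst h
        simp [Matrix.submatrix_apply, charmatrix_apply_eq, hB'def]
      · have h' : i.succ ≠ j.succ := fun hc => h (Fin.succ_injective _ hc)
        simp [Matrix.submatrix_apply, charmatrix_apply_ne _ _ _ h',
          charmatrix_apply_ne _ _ _ h, hB'def]
    have hfac : Cm.charpoly = (X - C (θ 0)) * B'.charpoly := by
      rw [Matrix.charpoly, Matrix.det_succ_column_zero]
      rw [Finset.sum_eq_single 0]
      · rw [Fin.val_zero, pow_zero, one_mul, charmatrix_apply_eq, hCol 0, if_pos rfl]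
        congr 1
        rw [show (Fin.succAbove 0) = Fin.succ from funext Fin.zero_succAbove, hsub]
        rfl
      · intro i _ hi
        rw [charmatrix_apply_ne _ _ _ hi, hCol i, if_neg hi]
        simp
      · simp
    have hcharB' : B'.charpoly = ∏ i : Fin m, (X - C (θ i.succ)) := by
      have h1 : (X - C (θ 0)) * B'.charpoly = (X - C (θ 0)) * ∏ i : Fin m, (X - C (θ i.succ)) := by
        rw [← hfac, hcharCm, hchar, Fin.prod_univ_succ]
      exact mul_left_cancel₀ (X_sub_C_ne_zero (θ 0)) h1
    obtain ⟨U', hU'unit, hU'diag, hU'low⟩ := IH B' (fun i => θ i.succ) hcharB'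
    -- assemble the block unitary
    set U2 : Matrix (Fin (m+1)) (Fin (m+1)) ℂ := Matrix.of (fun i j =>
      Fin.cases (Fin.cases (1:ℂ) (fun _ => 0) i)
        (fun j' => Fin.cases (0:ℂ) (fun i' => U' i' j') i) j) with hU2def
    have hU2_00 : U2 0 0 = 1 := rfl
    have hU2_s0 : ∀ i', U2 (Fin.succ i') 0 = 0 := fun _ => rfl
    have hU2_0s : ∀ j', U2 0 (Fin.succ j') = 0 := fun _ => rfl
    have hU2_ss : ∀ i' j', U2 (Fin.succ i') (Fin.succ j') = U' i' j' := fun _ _ => rfl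
    have hU2unit : U2ᴴ * U2 = 1 := by
      ext a b
      rw [Matrix.mul_apply]
      simp only [Matrix.conjTranspose_apply]
      rw [Fin.sum_univ_succ]
      induction a using Fin.cases with
      | zero =>
        induction b using Fin.cases with
        | zero => simp [hU2_00, hU2_s0]
        | succ b' => simp [hU2_00, hU2_s0, hU2_0s, (Fin.succ_ne_zero b').symm]
      | succ a' =>
        induction b using Fin.cases with
        | zero => simp [hU2_00, hU2_s0, hU2_0s, Fin.succ_ne_zero a']
        | succ b' =>
          have : ∑ x : Fin m, star (U2 x.succ (Fin.succ a')) * U2 x.succ (Fin.succ b')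
              = (U'ᴴ * U') a' b' := by
            simp [Matrix.mul_apply, Matrix.conjTranspose_apply, hU2_ss]
          rw [hU2_0s, hU2_0s]
          rw [this, hU'unit]
          simp [Matrix.one_apply, Fin.succ_inj]
    -- entries of the conjugated matrix
    have hCU2_0 : ∀ x, (Cm * U2) x 0 = Cm x 0 := by
      intro x
      rw [Matrix.mul_apply, Fin.sum_univ_succ, hU2_00]
      simp [hU2_s0]
    have hCU2_s : ∀ x b', (Cm * U2) x (Fin.succ b') = ∑ y', Cm x y'.succ * U' y' b' := by
      intro x b'
      rw [Matrix.mul_apply, Fin.sum_univ_succ, hU2_0s]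
      simp [hU2_ss]
    have hD00 : (U2ᴴ * Cm * U2) 0 0 = θ 0 := by
      rw [Matrix.mul_assoc, Matrix.mul_apply, Fin.sum_univ_succ]
      simp only [Matrix.conjTranspose_apply, hU2_00, hU2_s0]
      rw [hCU2_0]
      simp [hCol 0]
    have hDs0 : ∀ a', (U2ᴴ * Cm * U2) (Fin.succ a') 0 = 0 := by
      intro a'
      rw [Matrix.mul_assoc, Matrix.mul_apply, Fin.sum_univ_succ]
      simp only [Matrix.conjTranspose_apply, hU2_0s, star_zero, zero_mul, zero_add]
      have : ∀ x' : Fin m, star (U2 x'.succ (Fin.succ a')) * (Cm * U2) x'.succ 0 = 0 := by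
        intro x'
        rw [hCU2_0, hCol x'.succ, if_neg (Fin.succ_ne_zero x')]
        simp
      exact Finset.sum_eq_zero fun x _ => this x
    have hDss : ∀ a' b', (U2ᴴ * Cm * U2) (Fin.succ a') (Fin.succ b')
        = (U'ᴴ * B' * U') a' b' := by
      intro a' b'
      have hRHS : (U'ᴴ * B' * U') a' b'
          = ∑ x' : Fin m, star (U' x' a') * ∑ y' : Fin m, Cm x'.succ y'.succ * U' y' b' := by
        rw [Matrix.mul_assoc, Matrix.mul_apply]
        refine Finset.sum_congr rfl fun x' _ => ?_
        rw [Matrix.conjTranspose_apply, Matrix.mul_apply]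
        rfl
      rw [hRHS, Matrix.mul_assoc, Matrix.mul_apply, Fin.sum_univ_succ]
      simp only [Matrix.conjTranspose_apply, hU2_0s, star_zero, zero_mul, zero_add]
      refine Finset.sum_congr rfl fun x' _ => ?_
      rw [hU2_ss, hCU2_s]
    have hD : (U1 * U2)ᴴ * B * (U1 * U2) = U2ᴴ * Cm * U2 := by
      rw [Matrix.conjTranspose_mul, hCmdef]
      simp only [Matrix.mul_assoc]
    refine ⟨U1 * U2, ?_, ?_, ?_⟩
    · rw [Matrix.conjTranspose_mul, Matrix.mul_assoc, ← Matrix.mul_assoc U1ᴴ U1 U2, hU1,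
        Matrix.one_mul, hU2unit]
    · intro i
      rw [hD]
      induction i using Fin.cases with
      | zero => exact hD00
      | succ i' => rw [hDss]; exact hU'diag i'
    · intro i j hji
      rw [hD]
      induction i using Fin.cases with
      | zero => exact absurd hji (Fin.not_lt_zero j)
      | succ i' =>
        induction j using Fin.cases with
        | zero => exact hDs0 i'
        | succ j' =>
          rw [hDss]
          exact hU'low i' j' (Fin.succ_lt_succ_iff.mp hji)


lemma rearr {n r : ℕ} (hr1 : 1 ≤ r) (hrn : r ≤ n) (μ c : Fin n → ℝ) (hμ : Antitone μ)
    (hc0 : ∀ i, 0 ≤ c i) (hc1 : ∀ i, c i ≤ 1) (hsum : ∑ i, c i = r) :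
    ∑ i, μ i * c i ≤ ∑ i : Fin r, μ (Fin.castLE hrn i) := by
  set p : Fin n := ⟨r - 1, by omega⟩ with hp
  set t := μ p with ht
  set S : Finset (Fin n) := Finset.univ.filter (fun i => (i : ℕ) < r) with hS
  have hSim : S = Finset.image (Fin.castLE hrn) Finset.univ := by
    ext i
    simp only [hS, Finset.mem_filter, Finset.mem_univ, true_and, Finset.mem_image]
    constructor
    · intro h; exact ⟨⟨(i : ℕ), h⟩, Fin.ext rfl⟩
    · rintro ⟨a, rfl⟩; exact a.2
  have hinj : Function.Injective (Fin.castLE hrn) := fun a b h => Fin.castLE_inj.mp h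
  have hcard : S.card = r := by
    rw [hSim, Finset.card_image_of_injective _ hinj, Finset.card_univ, Fintype.card_fin]
  have hsumS : ∀ f : Fin n → ℝ, ∑ i ∈ S, f i = ∑ i : Fin r, f (Fin.castLE hrn i) := by
    intro f
    rw [hSim, Finset.sum_image (fun a _ b _ h => hinj h)]
  have step1 : ∑ i, μ i * c i = ∑ i, (μ i - t) * c i + t * (r : ℝ) := by
    rw [← hsum, Finset.mul_sum, ← Finset.sum_add_distrib]
    congr 1; ext i; ring
  have step2 : ∑ i, (μ i - t) * c i ≤ ∑ i ∈ S, (μ i - t) * c i := by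
    rw [← Finset.sum_filter_add_sum_filter_not Finset.univ (fun i : Fin n => (i : ℕ) < r)]
    have : ∑ i ∈ Finset.univ.filter (fun i : Fin n => ¬ (i : ℕ) < r), (μ i - t) * c i ≤ 0 := by
      apply Finset.sum_nonpos
      intro i hi
      simp only [Finset.mem_filter, Finset.mem_univ, true_and, not_lt] at hi
      have hpt : μ i ≤ t := hμ (show p ≤ i by simp [hp, Fin.le_def]; omega)
      exact mul_nonpos_of_nonpos_of_nonneg (by linarith) (hc0 i)
    linarith
  have step3 : ∑ i ∈ S, (μ i - t) * c i ≤ ∑ i ∈ S, (μ i - t) := by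
    apply Finset.sum_le_sum
    intro i hi
    simp only [hS, Finset.mem_filter, Finset.mem_univ, true_and] at hi
    have hpt : t ≤ μ i := hμ (show i ≤ p by simp [hp, Fin.le_def]; omega)
    calc (μ i - t) * c i ≤ (μ i - t) * 1 :=
          mul_le_mul_of_nonneg_left (hc1 i) (by linarith)
      _ = μ i - t := mul_one _
  have step4 : ∑ i ∈ S, (μ i - t) = ∑ i ∈ S, μ i - t * (r : ℝ) := by
    rw [Finset.sum_sub_distrib, Finset.sum_const, hcard]
    ring
  have := hsumS μ
  linarith

lemma kyfan {n r : ℕ} (hrn : r ≤ n) (μ : Fin n → ℝ) (hμ : Antitone μ)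
    (Z : Matrix (Fin n) (Fin r) ℂ) (hZ : Zᴴ * Z = 1) (hr1 : 1 ≤ r) :
    (Matrix.trace (Zᴴ * Matrix.diagonal (fun i => (μ i : ℂ)) * Z)).re
      ≤ ∑ i : Fin r, μ (Fin.castLE hrn i) := by
  set c : Fin n → ℝ := fun i => ∑ a : Fin r, Complex.normSq (Z i a) with hc
  have hterm : ∀ i (a : Fin r), (starRingEnd ℂ) (Z i a) * Z i a = (Complex.normSq (Z i a) : ℂ) := by
    intro i a
    rw [mul_comm, Complex.mul_conj]
  have h1 : ∀ a : Fin r, (Zᴴ * (Matrix.diagonal (fun i => (μ i : ℂ)) * Z)) a a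
      = ∑ i, (μ i : ℂ) * (Complex.normSq (Z i a) : ℂ) := by
    intro a
    rw [Matrix.mul_apply]
    refine Finset.sum_congr rfl fun i _ => ?_
    rw [Matrix.conjTranspose_apply, Matrix.diagonal_mul]
    simp only [Complex.star_def]
    linear_combination (μ i : ℂ) * hterm i a
  have htr : Matrix.trace (Zᴴ * Matrix.diagonal (fun i => (μ i : ℂ)) * Z)
      = ((∑ i, μ i * c i : ℝ) : ℂ) := by
    rw [Matrix.mul_assoc, Matrix.trace]
    simp only [Matrix.diag_apply, h1]
    rw [Finset.sum_comm]
    push_cast [hc]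
    refine Finset.sum_congr rfl fun i _ => ?_
    rw [Finset.mul_sum]
  -- properties of c
  have hc0 : ∀ i, 0 ≤ c i := fun i => Finset.sum_nonneg fun a _ => Complex.normSq_nonneg _
  have hcsum : ∑ i, c i = (r : ℝ) := by
    have h2 : Matrix.trace (Zᴴ * Z) = (r : ℂ) := by
      rw [hZ, Matrix.trace_one]
      simp
    have h3 : Matrix.trace (Zᴴ * Z) = ((∑ i, c i : ℝ) : ℂ) := by
      rw [Matrix.trace]
      simp only [Matrix.diag_apply, Matrix.mul_apply, Matrix.conjTranspose_apply]
      rw [Finset.sum_comm]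
      push_cast [hc]
      refine Finset.sum_congr rfl fun i _ => Finset.sum_congr rfl fun a _ => ?_
      simp only [Complex.star_def]
      exact hterm i a
    rw [h3] at h2
    exact_mod_cast h2
  have hc1 : ∀ i, c i ≤ 1 := by
    intro i
    set P : Matrix (Fin n) (Fin n) ℂ := Z * Zᴴ with hP
    have hPP : P * P = P := by
      rw [hP, Matrix.mul_assoc, ← Matrix.mul_assoc Zᴴ Z Zᴴ, hZ, Matrix.one_mul]
    have hPherm : Pᴴ = P := by
      rw [hP, Matrix.conjTranspose_mul, Matrix.conjTranspose_conjTranspose]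
    have hPdiag : ∀ i, P i i = (c i : ℂ) := by
      intro i
      rw [hP, Matrix.mul_apply]
      push_cast [hc]
      refine Finset.sum_congr rfl fun a _ => ?_
      rw [Matrix.conjTranspose_apply]
      simp only [Complex.star_def]
      exact Complex.mul_conj _
    have hPsym : ∀ a b, P b a = star (P a b) := by
      intro a b
      rw [← hPherm, Matrix.conjTranspose_apply, hPherm]
    have key : (c i : ℂ) = ((∑ j, Complex.normSq (P i j) : ℝ) : ℂ) := by
      conv_lhs => rw [← hPdiag i, ← hPP, Matrix.mul_apply]
      push_cast
      refine Finset.sum_congr rfl fun j _ => ?_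
      rw [hPsym i j]
      simp only [Complex.star_def]
      exact Complex.mul_conj _
    have keyR : c i = ∑ j, Complex.normSq (P i j) := by exact_mod_cast key
    have hge : Complex.normSq (P i i) ≤ ∑ j, Complex.normSq (P i j) :=
      Finset.single_le_sum (fun j _ => Complex.normSq_nonneg _) (Finset.mem_univ i)
    rw [hPdiag i] at hge
    have : Complex.normSq ((c i : ℂ)) = (c i)^2 := by
      rw [Complex.normSq_ofReal]; ring
    rw [this, ← keyR] at hge
    nlinarith [hc0 i]
  have := rearr hr1 hrn μ c hμ hc0 hc1 hcsum
  rw [htr, Complex.ofReal_re]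
  exact this

/-- Carden–Embree upper bound: the j-th rightmost eigenvalue of the compression
V*AV is bounded above by the mean of the j largest eigenvalues of the
Hermitian part of A. -/
theorem re_ritz_le_mean_of_largest_hermitian_eigenvalues
    {n k : ℕ} (hkn : k ≤ n) (A : Matrix (Fin n) (Fin n) ℂ)
    (H : Matrix (Fin n) (Fin n) ℂ) (hH : H = (1/2 : ℂ) • (A + Aᴴ))
    (μ : Fin n → ℝ) (hμ : Antitone μ)
    (hcharH : H.charpoly = ∏ i : Fin n, (X - C (μ i : ℂ)))
    (V : Matrix (Fin n) (Fin k) ℂ) (hV : Vᴴ * V = 1)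
    (θ : Fin k → ℂ) (hθord : ∀ i j : Fin k, i ≤ j → (θ j).re ≤ (θ i).re)
    (hcharθ : (Vᴴ * A * V).charpoly = ∏ i : Fin k, (X - C (θ i))) :
    ∀ j : Fin k,
      (θ j).re ≤
        (∑ i : Fin ((j : ℕ) + 1), μ (Fin.castLE ((Nat.succ_le_of_lt j.2).trans hkn) i))
          / ((j : ℕ) + 1) := by
  intro j
  have hrk : (j : ℕ) + 1 ≤ k := j.2
  have hrn : (j : ℕ) + 1 ≤ n := hrk.trans hkn
  set r := (j : ℕ) + 1 with hrdef
  -- H is Hermitian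
  have hHherm : Hᴴ = H := by
    rw [hH]
    rw [Matrix.conjTranspose_smul, Matrix.conjTranspose_add,
      Matrix.conjTranspose_conjTranspose]
    congr 1
    · simp [Complex.star_def, map_div₀]
    · rw [add_comm]
  -- diagonalize H with ordered eigenvalues
  obtain ⟨UH, hUH, hUHdiag, hUHlow⟩ := schur_aux n H (fun i => (μ i : ℂ)) hcharH
  have hUHr : UH * UHᴴ = 1 := mul_eq_one_comm.mp hUH
  set T := UHᴴ * H * UH with hTdef
  have hTherm : Tᴴ = T := by
    rw [hTdef, Matrix.conjTranspose_mul, Matrix.conjTranspose_mul,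
      Matrix.conjTranspose_conjTranspose, hHherm, Matrix.mul_assoc]
  have hTdiag : T = Matrix.diagonal (fun i => (μ i : ℂ)) := by
    ext a b
    rcases lt_trichotomy a b with h | h | h
    · have h0 : T b a = 0 := hUHlow b a h
      have h1 : T a b = star (T b a) := by
        conv_lhs => rw [← hTherm]
        exact Matrix.conjTranspose_apply T b a
      rw [h1, h0, star_zero, Matrix.diagonal_apply_ne _ (ne_of_lt h)]
    · subst h
      rw [Matrix.diagonal_apply_eq]
      exact hUHdiag a
    · rw [hUHlow a b h, Matrix.diagonal_apply_ne _ (ne_of_gt h)]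
  have hHdec : H = UH * Matrix.diagonal (fun i => (μ i : ℂ)) * UHᴴ := by
    rw [← hTdiag, hTdef]
    have h2 : UH * (UHᴴ * H * UH) * UHᴴ = (UH * UHᴴ) * H * (UH * UHᴴ) := by
      simp only [Matrix.mul_assoc]
    rw [h2, hUHr, Matrix.one_mul, Matrix.mul_one]
  -- Schur decomposition of the compression
  set B : Matrix (Fin k) (Fin k) ℂ := Vᴴ * A * V with hBdef
  obtain ⟨U, hUU, hUdiag, hUlow⟩ := schur_aux k B θ hcharθ
  set e : Fin r → Fin k := Fin.castLE hrk with hedef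
  set W0 : Matrix (Fin k) (Fin r) ℂ := U.submatrix id e with hW0def
  have hW0entry : ∀ a b, (W0ᴴ * W0) a b = (Uᴴ * U) (e a) (e b) := by
    intro a b
    rw [Matrix.mul_apply, Matrix.mul_apply]
    refine Finset.sum_congr rfl fun x _ => ?_
    simp [hW0def, Matrix.conjTranspose_apply, Matrix.submatrix_apply]
  have hW0 : W0ᴴ * W0 = 1 := by
    ext a b
    rw [hW0entry, hUU]
    by_cases h : a = b
    · subst h; simp [Matrix.one_apply]
    · rw [Matrix.one_apply_ne h, Matrix.one_apply_ne (fun hc => h (Fin.castLE_inj.mp hc))]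
  have hW0B : ∀ a b, (W0ᴴ * B * W0) a b = (Uᴴ * B * U) (e a) (e b) := by
    intro a b
    have hL : (W0ᴴ * B * W0) a b = ∑ x, ∑ y, star (U x (e a)) * (B x y * U y (e b)) := by
      rw [Matrix.mul_assoc, Matrix.mul_apply]
      refine Finset.sum_congr rfl fun x _ => ?_
      rw [Matrix.conjTranspose_apply, Matrix.mul_apply, Finset.mul_sum]
      refine Finset.sum_congr rfl fun y _ => ?_
      simp [hW0def]
    have hR : (Uᴴ * B * U) (e a) (e b) = ∑ x, ∑ y, star (U x (e a)) * (B x y * U y (e b)) := by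
      rw [Matrix.mul_assoc, Matrix.mul_apply]
      refine Finset.sum_congr rfl fun x _ => ?_
      rw [Matrix.conjTranspose_apply, Matrix.mul_apply, Finset.mul_sum]
    rw [hL, hR]
  have htrW0 : Matrix.trace (W0ᴴ * B * W0) = ∑ a : Fin r, θ (e a) := by
    rw [Matrix.trace]
    refine Finset.sum_congr rfl fun a _ => ?_
    rw [Matrix.diag_apply, hW0B, hUdiag]
  -- the isometry into ℂ^n
  set Y : Matrix (Fin n) (Fin r) ℂ := V * W0 with hYdef
  have hY : Yᴴ * Y = 1 := by
    rw [hYdef, Matrix.conjTranspose_mul, Matrix.mul_assoc, ← Matrix.mul_assoc Vᴴ V W0,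
      hV, Matrix.one_mul, hW0]
  have hYAY : Yᴴ * A * Y = W0ᴴ * B * W0 := by
    rw [hYdef, hBdef, Matrix.conjTranspose_mul]
    simp only [Matrix.mul_assoc]
  have htrY : (Matrix.trace (Yᴴ * H * Y)).re = ∑ a : Fin r, (θ (e a)).re := by
    have hsplit : Yᴴ * H * Y = (1/2 : ℂ) • (Yᴴ * A * Y + (Yᴴ * A * Y)ᴴ) := by
      rw [hH]
      rw [Matrix.mul_smul, Matrix.smul_mul]
      congr 1
      rw [Matrix.mul_add, Matrix.add_mul]
      congr 1
      simp [Matrix.conjTranspose_mul, Matrix.mul_assoc]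
    rw [hsplit, Matrix.trace_smul, Matrix.trace_add, Matrix.trace_conjTranspose]
    rw [hYAY, htrW0]
    set z : ℂ := ∑ a : Fin r, θ (e a) with hzdef
    have h3 : z + star z = ((2 * z.re : ℝ) : ℂ) := Complex.add_conj z
    rw [h3]
    have h4 : ((1/2 : ℂ) • ((2 * z.re : ℝ) : ℂ)).re = z.re := by
      simp
    rw [h4, hzdef]
    exact Complex.re_sum Finset.univ _
  -- Ky Fan bound
  set Z : Matrix (Fin n) (Fin r) ℂ := UHᴴ * Y with hZdef
  have hZ : Zᴴ * Z = 1 := by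
    rw [hZdef, Matrix.conjTranspose_mul, Matrix.conjTranspose_conjTranspose,
      Matrix.mul_assoc, ← Matrix.mul_assoc UH UHᴴ Y, hUHr, Matrix.one_mul, hY]
  have hZtr : Matrix.trace (Zᴴ * Matrix.diagonal (fun i => (μ i : ℂ)) * Z)
      = Matrix.trace (Yᴴ * H * Y) := by
    rw [hHdec, hZdef, Matrix.conjTranspose_mul, Matrix.conjTranspose_conjTranspose]
    simp only [Matrix.mul_assoc]
  have hKF := kyfan hrn μ hμ Z hZ (by omega)
  rw [hZtr, htrY] at hKF
  -- each of the first r Ritz values dominates θ j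
  have hmono : ∀ a : Fin r, (θ j).re ≤ (θ (e a)).re := by
    intro a
    refine hθord (e a) j ?_
    have := a.2
    simp only [hedef, Fin.le_def, Fin.coe_castLE]
    omega
  have hsum_ge : (r : ℝ) * (θ j).re ≤ ∑ a : Fin r, (θ (e a)).re := by
    calc (r : ℝ) * (θ j).re = ∑ _a : Fin r, (θ j).re := by
          rw [Finset.sum_const, Finset.card_univ, Fintype.card_fin, nsmul_eq_mul]
      _ ≤ ∑ a : Fin r, (θ (e a)).re := Finset.sum_le_sum fun a _ => hmono a
  have hrpos : (0 : ℝ) < ((j : ℕ) : ℝ) + 1 := by positivity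
  rw [le_div_iff₀ hrpos]
  calc (θ j).re * (((j : ℕ) : ℝ) + 1) = (r : ℝ) * (θ j).re := by
        rw [hrdef]; push_cast; ring
    _ ≤ ∑ a : Fin r, (θ (e a)).re := hsum_ge
    _ ≤ ∑ i : Fin r, μ (Fin.castLE hrn i) := hKF
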